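/- Let N be a natural number and K ⊆ {0,1,…,N−1}. Then the principal submatrix 𝓕_N[K] of the Fourier matrix is singular if and only if the complementary principal submatrix 𝓕_N[K^C] is singular, where K^C = {0,1,…,N−1} \ K. -/

import Mathlib

open Complex Matrix Finset

/-- `omegaN N` is the principal `N`-th root of unity `ω = e^{2πi/N}`. -/
noncomputable def omegaN (N : ℕ) : ℂ := Complex.exp (2 * Real.pi * Complex.I / N)

/-- `fourierMinor N K` is the principal submatrix `𝓕_N[K] = (ω^{kℓ})_{k,ℓ ∈ K}`
of the `N`-dimensional Fourier matrix, indexed by the finite set `K`. -/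
noncomputable def fourierMinor (N : ℕ) (K : Finset ℕ) : Matrix K K ℂ :=
  fun k l => omegaN N ^ ((k : ℕ) * (l : ℕ))

lemma omegaN_prim (N : ℕ) (hN : 0 < N) : IsPrimitiveRoot (omegaN N) N :=
  Complex.isPrimitiveRoot_exp N hN.ne'

lemma abs_omegaN (N : ℕ) : ‖omegaN N‖ = 1 := by
  have : (2 * (Real.pi : ℂ) * Complex.I / (N : ℂ)) = ((2 * Real.pi / N : ℝ) : ℂ) * Complex.I := by
    push_cast; ring
  rw [omegaN, this, Complex.norm_exp_ofReal_mul_I]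

lemma conj_omegaN (N : ℕ) : (starRingEnd ℂ) (omegaN N) = (omegaN N)⁻¹ :=
  (Complex.inv_eq_conj (abs_omegaN N)).symm

lemma orth (N : ℕ) (hN : 0 < N) {a b : ℕ} (ha : a < N) (hb : b < N) :
    ∑ k ∈ Finset.range N, omegaN N ^ (k * a) * (omegaN N ^ (k * b))⁻¹ =
      if a = b then (N : ℂ) else 0 := by
  set ω := omegaN N with hω
  have hprim := omegaN_prim N hN
  have hω0 : ω ≠ 0 := by
    intro h
    have := abs_omegaN N
    rw [← hω, h] at this; simp at this
  have hterm : ∀ k, ω ^ (k * a) * (ω ^ (k * b))⁻¹ = (ω ^ a * (ω ^ b)⁻¹) ^ k := by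
    intro k
    rw [mul_pow, mul_comm k a, mul_comm k b, pow_mul, pow_mul, inv_pow]
  simp_rw [hterm]
  by_cases hab : a = b
  · subst hab
    simp [mul_inv_cancel₀ (pow_ne_zero a hω0), hN.le]
  · rw [if_neg hab]
    set ζ := ω ^ a * (ω ^ b)⁻¹ with hζ
    have hζ1 : ζ ≠ 1 := by
      intro h
      apply hab
      apply hprim.pow_inj ha hb
      rw [hζ, mul_inv_eq_one₀ (pow_ne_zero b hω0)] at h
      exact h
    have hζN : ζ ^ N = 1 := by
      rw [hζ, mul_pow, inv_pow, ← pow_mul, ← pow_mul, mul_comm a N, mul_comm b N,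
        pow_mul, pow_mul, hprim.pow_eq_one, one_pow, one_pow, inv_one, mul_one]
    rw [geom_sum_eq hζ1, hζN, sub_self, zero_div]

lemma key (N : ℕ) (hN : 0 < N) (K : Finset ℕ) (hK : K ⊆ Finset.range N)
    (h : (fourierMinor N K).det = 0) :
    (fourierMinor N (Finset.range N \ K)).det = 0 := by
  classical
  obtain ⟨v, hv0, hv⟩ := (Matrix.exists_mulVec_eq_zero_iff).2 h
  set ω := omegaN N with hωdef
  set x : ℕ → ℂ := fun l => if hl : l ∈ K then v ⟨l, hl⟩ else 0 with hx
  set y : ℕ → ℂ := fun k => ∑ l ∈ K, ω ^ (k * l) * x l with hy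
  -- y vanishes on K
  have hyK : ∀ k ∈ K, y k = 0 := by
    intro k hk
    have h1 := congrFun hv ⟨k, hk⟩
    have h2 : (fourierMinor N K).mulVec v ⟨k, hk⟩ = y k := by
      rw [Matrix.mulVec, dotProduct, Finset.univ_eq_attach]
      rw [show y k = ∑ l ∈ K, ω ^ (k * l) * x l from rfl]
      rw [← Finset.sum_attach K (fun l => ω ^ (k * l) * x l)]
      refine Finset.sum_congr rfl fun l _ => ?_
      simp [fourierMinor, hx, l.2, hωdef]
    rw [h2] at h1
    simpa using h1
  -- Fourier inversion
  have hinv : ∀ j, j < N → ∑ k ∈ Finset.range N, (ω ^ (k * j))⁻¹ * y k = N * x j := by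
    intro j hj
    have hstep : ∀ k, (ω ^ (k * j))⁻¹ * y k
        = ∑ l ∈ K, ω ^ (k * l) * (ω ^ (k * j))⁻¹ * x l := by
      intro k
      rw [hy, Finset.mul_sum]
      exact Finset.sum_congr rfl fun l _ => by ring
    simp_rw [hstep]
    rw [Finset.sum_comm]
    have hcol : ∀ l ∈ K, ∑ k ∈ Finset.range N, ω ^ (k * l) * (ω ^ (k * j))⁻¹ * x l
        = (if l = j then (N : ℂ) else 0) * x l := by
      intro l hl
      rw [← Finset.sum_mul, orth N hN (Finset.mem_range.mp (hK hl)) hj]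
    rw [Finset.sum_congr rfl hcol]
    simp_rw [ite_mul, zero_mul]
    rw [Finset.sum_ite_eq' K j (fun l => (N : ℂ) * x l)]
    by_cases hjK : j ∈ K
    · rw [if_pos hjK]
    · rw [if_neg hjK, hx]
      simp [hjK]
  -- y is nonzero somewhere on range N \ K
  have hy0 : ∃ k ∈ Finset.range N \ K, y k ≠ 0 := by
    by_contra hcon
    push_neg at hcon
    have hall : ∀ k ∈ Finset.range N, y k = 0 := by
      intro k hk
      by_cases hkK : k ∈ K
      · exact hyK k hkK
      · exact hcon k (Finset.mem_sdiff.mpr ⟨hk, hkK⟩)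
    apply hv0
    funext l
    have hlN : (l : ℕ) < N := Finset.mem_range.mp (hK l.2)
    have := hinv l hlN
    rw [Finset.sum_congr rfl (fun k hk => by rw [hall k hk, mul_zero])] at this
    rw [Finset.sum_const_zero] at this
    have hNne : (N : ℂ) ≠ 0 := Nat.cast_ne_zero.mpr hN.ne'
    have hxl : x (l : ℕ) = 0 :=
      (mul_eq_zero.mp this.symm).resolve_left hNne
    rw [hx] at hxl
    simp only [l.2, dif_pos] at hxl
    simpa using hxl
  obtain ⟨k1, hk1, hyk1⟩ := hy0
  -- the conjugated complementary minor is singular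
  set Kc := Finset.range N \ K with hKc
  set w : Kc → ℂ := fun k => y k with hw
  have hw0 : w ≠ 0 := by
    intro h
    exact hyk1 (congrFun h ⟨k1, hk1⟩)
  have hker : ((fourierMinor N Kc).map (starRingEnd ℂ)).mulVec w = 0 := by
    funext j
    have hjN : (j : ℕ) < N := Finset.mem_range.mp (Finset.mem_sdiff.mp j.2).1
    have hjK : (j : ℕ) ∉ K := (Finset.mem_sdiff.mp j.2).2
    rw [Matrix.mulVec, dotProduct, Finset.univ_eq_attach]
    have hentry : ∀ k : Kc, (fourierMinor N Kc).map (starRingEnd ℂ) j k * w k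
        = (ω ^ ((k : ℕ) * (j : ℕ)))⁻¹ * y k := by
      intro k
      rw [Matrix.map_apply, fourierMinor, hw]
      rw [map_pow, conj_omegaN, inv_pow, mul_comm (j : ℕ) (k : ℕ)]
    rw [Finset.sum_congr rfl (fun k _ => hentry k)]
    rw [Finset.sum_attach Kc (fun k => (ω ^ (k * (j : ℕ)))⁻¹ * y k)]
    have hext : ∑ k ∈ Kc, (ω ^ (k * (j : ℕ)))⁻¹ * y k
        = ∑ k ∈ Finset.range N, (ω ^ (k * (j : ℕ)))⁻¹ * y k := by
      refine Finset.sum_subset (Finset.sdiff_subset) ?_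
      intro k hk hkc
      have hkK : k ∈ K := by
        by_contra hkK
        exact hkc (Finset.mem_sdiff.mpr ⟨hk, hkK⟩)
      rw [hyK k hkK, mul_zero]
    rw [hext, hinv j hjN]
    have : x (j : ℕ) = 0 := by rw [hx]; simp [hjK]
    simp [this]
  have hdet : ((fourierMinor N Kc).map (starRingEnd ℂ)).det = 0 :=
    Matrix.exists_mulVec_eq_zero_iff.mp ⟨w, hw0, hker⟩
  have h3 : (starRingEnd ℂ) (fourierMinor N Kc).det = 0 := by
    rw [RingHom.map_det]
    simpa [RingHom.mapMatrix_apply] using hdet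
  exact (starRingEnd ℂ).injective (by simpa using h3)

/-- `𝓕_N[K]` is singular if and only if the complementary principal submatrix
`𝓕_N[Kᶜ]` is singular. -/
theorem fourier_principal_minor_singular_iff_complement_singular
    (N : ℕ) (K : Finset ℕ) (hK : K ⊆ Finset.range N) :
    (fourierMinor N K).det = 0 ↔ (fourierMinor N (Finset.range N \ K)).det = 0 := by
  rcases Nat.eq_zero_or_pos N with hN | hN
  · subst hN
    have : K = ∅ := Finset.subset_empty.mp (by simpa using hK)
    subst this
    haveI : IsEmpty ↥(Finset.range 0 \ (∅ : Finset ℕ)) := ⟨fun a => by simpa using a.2⟩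
    rw [Matrix.det_isEmpty, Matrix.det_isEmpty]
  · constructor
    · exact key N hN K hK
    · intro h
      have := key N hN (Finset.range N \ K) (Finset.sdiff_subset) h
      rwa [Finset.sdiff_sdiff_eq_self hK] at this
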